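/- arXiv:1002.2578 — 2 statements merged into one kernel-verified Lean document; each statement's English description precedes it below -/
import Mathlib

section
/- If Y is a fixed point combinator, then Y ε I is a fixed point combinator, where ε = λabc.bc(abc). -/
/-- Untyped λ-terms in de Bruijn notation. -/
inductive Lam : Type
  | var : Nat → Lam
  | app : Lam → Lam → Lam
  | lam : Lam → Lam
  deriving DecidableEq

namespace Lam

/-- Lift (shift) free variables ≥ `d` by one. -/
def lift (d : Nat) : Lam → Lam
  | var n => if n < d then var n else var (n + 1)
  | app s t => app (lift d s) (lift d t)
  | lam t => lam (lift (d + 1) t)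

/-- Capture-avoiding substitution of `u` for the variable with index `k`. -/
def subst (k : Nat) (u : Lam) : Lam → Lam
  | var n => if n = k then u else if k < n then var (n - 1) else var n
  | app s t => app (subst k u s) (subst k u t)
  | lam t => lam (subst (k + 1) (lift 0 u) t)

/-- One-step β-reduction `→β` (compatible closure of the β-rule). -/
inductive Step : Lam → Lam → Prop
  | beta (t u : Lam) : Step (app (lam t) u) (subst 0 u t)
  | appL {s s' : Lam} (t : Lam) : Step s s' → Step (app s t) (app s' t)
  | appR (s : Lam) {t t' : Lam} : Step t t' → Step (app s t) (app s t')
  | lam {t t' : Lam} : Step t t' → Step (lam t) (lam t')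

/-- Many-step β-reduction `↠β`. -/
def Red : Lam → Lam → Prop := Relation.ReflTransGen Step

/-- β-convertibility `=β`. -/
def Conv : Lam → Lam → Prop := Relation.EqvGen Step

/-- `Y` is a fixed point combinator: `Y x =β x (Y x)` for a fresh variable `x`. -/
def isFPC (Y : Lam) : Prop :=
  Conv (app (lift 0 Y) (var 0)) (app (var 0) (app (lift 0 Y) (var 0)))

/-- `M P^n`: `M` applied to `n` copies of `P`. -/
def appIter (M P : Lam) : Nat → Lam
  | 0 => M
  | n + 1 => appIter (app M P) P n

/-- `I = λx.x` -/
def K_I : Lam := lam (var 0)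

/-- `S = λxyz.xz(yz)` -/
def K_S : Lam := lam (lam (lam (app (app (var 2) (var 0)) (app (var 1) (var 0)))))

/-- `B = λxyz.x(yz)` -/
def K_B : Lam := lam (lam (lam (app (var 2) (app (var 1) (var 0)))))

/-- `δ = λab.b(ab)` -/
def K_delta : Lam := lam (lam (app (var 0) (app (var 1) (var 0))))

/-- `ω_f = λx.f(xx)` (with `f` the variable bound just outside). -/
def K_omega : Lam := lam (app (var 1) (app (var 0) (var 0)))

/-- Curry's fpc `Y0 = λf.ω_f ω_f`. -/
def Y0 : Lam := lam (app K_omega K_omega)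

/-- `η = λxf.f(xxf)` -/
def K_eta : Lam := lam (lam (app (var 0) (app (app (var 1) (var 1)) (var 0))))

/-- Turing's fpc `Y1 = ηη`. -/
def Y1 : Lam := app K_eta K_eta

/-- One head reduction step: contraction of the head redex. -/
inductive Head : Lam → Lam → Prop
  | beta (t u : Lam) : Head (app (lam t) u) (subst 0 u t)
  | app {s s' : Lam} (t : Lam) : (∀ u, s ≠ lam u) → Head s s' → Head (app s t) (app s' t)
  | lam {t t' : Lam} : Head t t' → Head (lam t) (lam t')

/-- Exactly `k` head reduction steps. -/
def HeadN : Nat → Lam → Lam → Prop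
  | 0, s, t => s = t
  | k + 1, s, t => ∃ u, Head s u ∧ HeadN k u t

/-- Exactly `k` β-reduction steps. -/
def StepN : Nat → Lam → Lam → Prop
  | 0, s, t => s = t
  | k + 1, s, t => ∃ u, Step s u ∧ StepN k u t

/-- `ε = λabc.bc(abc)` -/
def K_eps : Lam :=
  lam (lam (lam (app (app (var 1) (var 0)) (app (app (var 2) (var 1)) (var 0)))))

def closedB : Nat → Lam → Bool
  | d, var n => n < d
  | d, app s t => closedB d s && closedB d t
  | d, lam t => closedB (d+1) t

lemma lift_closed : ∀ t d e, closedB d t = true → d ≤ e → lift e t = t := by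
  intro t
  induction t with
  | var n => intro d e h hde; simp [closedB] at h; simp [lift]; omega
  | app s t ihs iht =>
    intro d e h hde; simp [closedB] at h
    simp [lift, ihs d e h.1 hde, iht d e h.2 hde]
  | lam t ih =>
    intro d e h hde; simp [closedB] at h
    simp [lift, ih (d+1) (e+1) h (by omega)]

lemma subst_closed : ∀ t d k u, closedB d t = true → d ≤ k → subst k u t = t := by
  intro t
  induction t with
  | var n =>
    intro d k u h hdk; simp [closedB] at h
    simp only [subst]
    rw [if_neg (by omega), if_neg (by omega)]
  | app s t ihs iht =>
    intro d k u h hdk; simp [closedB] at h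
    simp [subst, ihs d k _ h.1 hdk, iht d k _ h.2 hdk]
  | lam t ih =>
    intro d k u h hdk; simp [closedB] at h
    simp [subst, ih (d+1) (k+1) _ h (by omega)]

lemma lift_lift : ∀ t i j, i ≤ j → lift i (lift j t) = lift (j+1) (lift i t) := by
  intro t
  induction t with
  | var n =>
    intro i j h; simp only [lift]
    split_ifs <;> (try simp only [lift]) <;> (try split_ifs) <;>
      first | rfl | (congr 1; omega) | (exfalso; omega)
  | app s t ihs iht => intro i j h; simp [lift, ihs i j h, iht i j h]
  | lam t ih => intro i j h; simp [lift, ih (i+1) (j+1) (by omega)]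

lemma subst_lift : ∀ t k u, subst k u (lift k t) = t := by
  intro t
  induction t with
  | var n =>
    intro k u; simp only [lift]
    split_ifs <;> (try simp only [subst]) <;> (try split_ifs) <;>
      first | rfl | (congr 1; omega) | (exfalso; omega)
  | app s t ihs iht => intro k u; simp [lift, subst, ihs, iht]
  | lam t ih => intro k u; simp [lift, subst, ih]

lemma lift_subst_le : ∀ t k d u, k ≤ d → lift d (subst k u t) = subst k (lift d u) (lift (d+1) t) := by
  intro t
  induction t with
  | var n =>
    intro k d u h; simp only [subst, lift]
    split_ifs <;> (try simp only [subst, lift]) <;> (try split_ifs) <;>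
      first | rfl | (congr 1; omega) | (exfalso; omega)
  | app s t ihs iht => intro k d u h; simp [lift, subst, ihs _ _ _ h, iht _ _ _ h]
  | lam t ih =>
    intro k d u h
    simp only [lift, subst, lam.injEq]
    rw [ih (k+1) (d+1) _ (by omega), lift_lift u 0 d (by omega)]

lemma lift_subst_closed : ∀ t d k v, closedB 0 v = true → d ≤ k →
    lift d (subst k v t) = subst (k+1) v (lift d t) := by
  intro t
  induction t with
  | var n =>
    intro d k v hv h; simp only [subst, lift]
    split_ifs <;> (try simp only [subst, lift, lift_closed v 0 d hv (Nat.zero_le _)]) <;>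
      (try split_ifs) <;> first | rfl | (congr 1; omega) | (exfalso; omega)
  | app s t ihs iht => intro d k v hv h; simp [lift, subst, ihs _ _ _ hv h, iht _ _ _ hv h]
  | lam t ih =>
    intro d k v hv h
    simp only [lift, subst, lam.injEq, lift_closed v 0 0 hv (by omega)]
    exact ih (d+1) (k+1) v hv (by omega)

lemma subst_subst_closed : ∀ t j k u v, closedB 0 v = true → j ≤ k →
    subst k v (subst j u t) = subst j (subst k v u) (subst (k+1) v t) := by
  intro t
  induction t with
  | var n =>
    intro j k u v hv h; simp only [subst]
    split_ifs <;>
      (try simp only [subst, subst_closed v 0 j (subst k v u) hv (Nat.zero_le _)]) <;>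
      (try split_ifs) <;> first | rfl | (congr 1; omega) | (exfalso; omega)
  | app s t ihs iht => intro j k u v hv h; simp [subst, ihs _ _ _ _ hv h, iht _ _ _ _ hv h]
  | lam t ih =>
    intro j k u v hv h
    simp only [subst, lam.injEq, lift_closed v 0 0 hv (by omega)]
    rw [ih (j+1) (k+1) _ v hv (by omega), lift_subst_closed u 0 k v hv (by omega)]

lemma Step.lift_ {s t : Lam} (h : Step s t) : ∀ d, Step (lift d s) (lift d t) := by
  induction h with
  | beta t u => intro d; rw [lift_subst_le t 0 d u (by omega)]; exact Step.beta _ _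
  | appL t _ ih => intro d; exact Step.appL _ (ih d)
  | appR s _ ih => intro d; exact Step.appR _ (ih d)
  | lam _ ih => intro d; exact Step.lam (ih (d+1))

lemma Step.subst_c {s t v : Lam} (hv : closedB 0 v = true) (h : Step s t) :
    ∀ k, Step (subst k v s) (subst k v t) := by
  induction h with
  | beta t u =>
    intro k
    rw [subst_subst_closed t 0 k u v hv (by omega)]
    have : subst k v (Lam.app (Lam.lam t) u)
        = Lam.app (Lam.lam (subst (k+1) v t)) (subst k v u) := by
      simp [subst, lift_closed v 0 0 hv (by omega)]
    rw [this]
    exact Step.beta _ _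
  | appL t _ ih => intro k; exact Step.appL _ (ih k)
  | appR s _ ih => intro k; exact Step.appR _ (ih k)
  | lam _ ih =>
    intro k
    simp only [subst, lift_closed v 0 0 hv (by omega)]
    exact Step.lam (ih (k+1))

lemma Conv.lift_ {s t : Lam} (h : Conv s t) (d : Nat) : Conv (lift d s) (lift d t) := by
  induction h with
  | rel _ _ h => exact Relation.EqvGen.rel _ _ (h.lift_ d)
  | refl _ => exact Relation.EqvGen.refl _
  | symm _ _ _ ih => exact Relation.EqvGen.symm _ _ ih
  | trans _ _ _ _ _ ih1 ih2 => exact Relation.EqvGen.trans _ _ _ ih1 ih2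

lemma Conv.subst_c {s t v : Lam} (hv : closedB 0 v = true) (h : Conv s t) (k : Nat) :
    Conv (subst k v s) (subst k v t) := by
  induction h with
  | rel _ _ h => exact Relation.EqvGen.rel _ _ (h.subst_c hv k)
  | refl _ => exact Relation.EqvGen.refl _
  | symm _ _ _ ih => exact Relation.EqvGen.symm _ _ ih
  | trans _ _ _ _ _ ih1 ih2 => exact Relation.EqvGen.trans _ _ _ ih1 ih2

lemma Conv.appL {s s' : Lam} (t : Lam) (h : Conv s s') : Conv (app s t) (app s' t) := by
  induction h with
  | rel _ _ h => exact Relation.EqvGen.rel _ _ (Step.appL _ h)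
  | refl _ => exact Relation.EqvGen.refl _
  | symm _ _ _ ih => exact Relation.EqvGen.symm _ _ ih
  | trans _ _ _ _ _ ih1 ih2 => exact Relation.EqvGen.trans _ _ _ ih1 ih2

lemma Red.toConv {s t : Lam} (h : Red s t) : Conv s t := by
  induction h with
  | refl => exact Relation.EqvGen.refl _
  | tail _ h ih => exact Relation.EqvGen.trans _ _ _ ih (Relation.EqvGen.rel _ _ h)


lemma red_eps (a : Lam) :
    Red (app (app (app K_eps a) K_I) (var 0)) (app (var 0) (app (app a K_I) (var 0))) := by
  have e1 : Step (app K_eps a)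
      (lam (lam (app (app (var 1) (var 0))
        (app (app (lift 0 (lift 0 a)) (var 1)) (var 0))))) := by
    have := Step.beta
      (lam (lam (app (app (var 1) (var 0)) (app (app (var 2) (var 1)) (var 0))))) a
    simpa [K_eps, subst] using this
  have e2 : Step (app (lam (lam (app (app (var 1) (var 0))
        (app (app (lift 0 (lift 0 a)) (var 1)) (var 0))))) K_I)
      (lam (app (app K_I (var 0)) (app (app (lift 0 a) K_I) (var 0)))) := by
    have := Step.beta
      (lam (app (app (var 1) (var 0)) (app (app (lift 0 (lift 0 a)) (var 1)) (var 0)))) K_I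
    rw [lift_lift a 0 0 (le_refl 0)] at this ⊢
    simpa [K_I, subst, lift, subst_lift] using this
  have e3 : Step (app (lam (app (app K_I (var 0))
        (app (app (lift 0 a) K_I) (var 0)))) (var 0))
      (app (app K_I (var 0)) (app (app a K_I) (var 0))) := by
    have := Step.beta (app (app K_I (var 0)) (app (app (lift 0 a) K_I) (var 0))) (var 0)
    simpa [K_I, subst, subst_lift] using this
  have e4 : Step (app K_I (var 0)) (var 0) := by
    have := Step.beta (var 0) (var 0)
    simpa [K_I, subst] using this
  exact Relation.ReflTransGen.head (Step.appL _ (Step.appL _ e1))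
    (Relation.ReflTransGen.head (Step.appL _ e2)
      (Relation.ReflTransGen.head e3
        (Relation.ReflTransGen.head (Step.appL _ e4) Relation.ReflTransGen.refl)))


/-- If `Y` is an fpc, then `Y ε I` is an fpc. -/
theorem YepsI_isFPC : ∀ Y : Lam, isFPC Y → isFPC (app (app Y K_eps) K_I) := by
  intro Y h
  unfold isFPC at h ⊢
  have heps : closedB 0 K_eps = true := by decide
  have hI : closedB 0 K_I = true := by decide
  have h1 := h.subst_c heps 0
  have sY : subst 0 K_eps (app (lift 0 Y) (var 0)) = app Y K_eps := by
    show app (subst 0 K_eps (lift 0 Y)) (subst 0 K_eps (var 0)) = _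
    rw [subst_lift]; rfl
  have sE : subst 0 K_eps (app (var 0) (app (lift 0 Y) (var 0)))
      = app K_eps (app Y K_eps) := by
    show app (subst 0 K_eps (var 0)) (subst 0 K_eps (app (lift 0 Y) (var 0))) = _
    rw [sY]; rfl
  rw [sY, sE] at h1
  have h2 := h1.lift_ 0
  have lY : lift 0 (app Y K_eps) = app (lift 0 Y) K_eps := by
    show app (lift 0 Y) (lift 0 K_eps) = _
    rw [lift_closed K_eps 0 0 heps (le_refl 0)]
  have lE : lift 0 (app K_eps (app Y K_eps)) = app K_eps (app (lift 0 Y) K_eps) := by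
    show app (lift 0 K_eps) (lift 0 (app Y K_eps)) = _
    rw [lift_closed K_eps 0 0 heps (le_refl 0), lY]
  rw [lY, lE] at h2
  have lG : lift 0 (app (app Y K_eps) K_I) = app (app (lift 0 Y) K_eps) K_I := by
    show app (lift 0 (app Y K_eps)) (lift 0 K_I) = _
    rw [lY, lift_closed K_I 0 0 hI (le_refl 0)]
  rw [lG]
  set A := app (lift 0 Y) K_eps with hA
  have c1 : Conv (app (app A K_I) (var 0)) (app (app (app K_eps A) K_I) (var 0)) :=
    Conv.appL _ (Conv.appL _ h2)
  have c2 := (red_eps A).toConv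
  exact Relation.EqvGen.trans _ _ _ c1 c2


end Lam
end

section
/- Elementary diagram for head steps: if M →h M1 is a head reduction step and M →β M2 is an arbitrary β-reduction step, then there exists a term M' such that M1 ↠β M' and either M2 ≡ M' or M2 →h M' (the head step cannot be duplicated, only erased). -/
namespace Lam

theorem lift_lift_s11 (t : Lam) {d e : Nat} (h : d ≤ e) :
    lift d (lift e t) = lift (e + 1) (lift d t) := by
  induction t generalizing d e with
  | var n => grind [lift]
  | app s t ihs iht => simp [lift, ihs h, iht h]
  | lam t ih => simp [lift, ih (Nat.succ_le_succ h)]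

theorem subst_lift_s11 (t : Lam) (j : Nat) (c : Lam) : subst j c (lift j t) = t := by
  induction t generalizing j c with
  | var n => grind [lift, subst]
  | app s t ihs iht => simp [lift, subst, ihs, iht]
  | lam t ih => simp [lift, subst, ih]

theorem lift_subst_of_le (t : Lam) {k d : Nat} (u : Lam) (h : k ≤ d) :
    lift d (subst k u t) = subst k (lift d u) (lift (d + 1) t) := by
  induction t generalizing k d u with
  | var n => grind [lift, subst]
  | app s t ihs iht => simp [lift, subst, ihs _ h, iht _ h]
  | lam t ih =>
      simp only [lift, subst, ih _ (Nat.succ_le_succ h), lift_lift_s11 u (Nat.zero_le d)]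

theorem lift_subst_of_ge (t : Lam) {k d : Nat} (u : Lam) (h : d ≤ k) :
    lift d (subst k u t) = subst (k + 1) (lift d u) (lift d t) := by
  induction t generalizing k d u with
  | var n => grind [lift, subst]
  | app s t ihs iht => simp [lift, subst, ihs _ h, iht _ h]
  | lam t ih =>
      simp only [lift, subst, ih _ (Nat.succ_le_succ h), lift_lift_s11 u (Nat.zero_le d)]

theorem subst_subst (t : Lam) {j k : Nat} (b u : Lam) (h : j ≤ k) :
    subst k u (subst j b t) = subst j (subst k u b) (subst (k + 1) (lift j u) t) := by
  induction t generalizing j k b u with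
  | var n => grind [lift, subst, subst_lift_s11]
  | app s t ihs iht => simp [subst, ihs _ _ h, iht _ _ h]
  | lam t ih =>
      simp only [subst, ih _ _ (Nat.succ_le_succ h), lift_subst_of_ge b u (Nat.zero_le k),
        lift_lift_s11 u (Nat.zero_le j)]

theorem Step.subst {t t' : Lam} (h : Step t t') (k : Nat) (u : Lam) :
    Step (subst k u t) (subst k u t') := by
  induction h generalizing k u with
  | beta t b => rw [subst_subst t b u (Nat.zero_le k)]; exact .beta _ _
  | appL t _ ih => exact .appL _ (ih k u)
  | appR s _ ih => exact .appR _ (ih k u)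
  | lam _ ih => exact .lam (ih (k + 1) (lift 0 u))

theorem Step.lift {t t' : Lam} (h : Step t t') (d : Nat) : Step (lift d t) (lift d t') := by
  induction h generalizing d with
  | beta t u => rw [lift_subst_of_le t u (Nat.zero_le d)]; exact .beta _ _
  | appL t _ ih => exact .appL _ (ih d)
  | appR s _ ih => exact .appR _ (ih d)
  | lam _ ih => exact .lam (ih (d + 1))

theorem Red.app_left {s s' : Lam} (t : Lam) (h : Red s s') : Red (app s t) (app s' t) :=
  h.lift (app · t) fun _ _ => Step.appL t

theorem Red.app_right (s : Lam) {t t' : Lam} (h : Red t t') : Red (app s t) (app s t') :=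
  h.lift (app s) fun _ _ => Step.appR s

theorem Red.lam {t t' : Lam} (h : Red t t') : Red (lam t) (lam t') :=
  h.lift Lam.lam fun _ _ => Step.lam

theorem Red.subst_of_step (t : Lam) (k : Nat) {u u' : Lam} (h : Step u u') :
    Red (subst k u t) (subst k u' t) := by
  induction t generalizing k u u' with
  | var n =>
      simp only [subst]
      split_ifs
      exacts [.single h, .refl, .refl]
  | app s t ihs iht => exact (Red.app_left _ (ihs k h)).trans (Red.app_right _ (iht k h))
  | lam t ih => exact Red.lam (ih (k + 1) (h.lift 0))

theorem Head.eq_of_step_to_lam {s s' s'' : Lam} (hh : Head s s') (hs : ∀ u, s ≠ Lam.lam u)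
    (hst : Step s s'') (hs'' : ∃ u, s'' = Lam.lam u) : s'' = s' := by
  obtain ⟨v, hv⟩ := hs''
  cases hh with
  | beta => cases hst with
    | beta => rfl
    | appL _ h => cases h; cases hv
    | appR => cases hv
  | app _ hs' => cases hst with
    | beta => exact absurd rfl (hs' _)
    | appL | appR => cases hv
  | lam => exact absurd rfl (hs _)

def HeadJoinable (M1 M2 : Lam) : Prop := ∃ M', Red M1 M' ∧ (M2 = M' ∨ Head M2 M')

theorem HeadJoinable.refl (M : Lam) : HeadJoinable M M := ⟨M, .refl, .inl rfl⟩

theorem HeadJoinable.of_step_redex {t u M2 : Lam} (h : Step (app (Lam.lam t) u) M2) :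
    HeadJoinable (subst 0 u t) M2 := by
  cases h with
  | beta => exact .refl _
  | appL _ h =>
      cases h with
      | lam h => exact ⟨_, .single (h.subst 0 u), .inr (.beta _ _)⟩
  | appR _ h => exact ⟨_, Red.subst_of_step t 0 h, .inr (.beta _ _)⟩

theorem HeadJoinable.app_left {s s' : Lam} (t : Lam) (h : HeadJoinable s s')
    (hs' : ∀ u, s' ≠ Lam.lam u) : HeadJoinable (app s t) (app s' t) := by
  obtain ⟨M', hred, rfl | hhead⟩ := h
  · exact ⟨_, hred.app_left t, .inl rfl⟩
  · exact ⟨_, hred.app_left t, .inr (.app t hs' hhead)⟩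

theorem HeadJoinable.lam {t t' : Lam} (h : HeadJoinable t t') :
    HeadJoinable (Lam.lam t) (Lam.lam t') := by
  obtain ⟨M', hred, rfl | hhead⟩ := h
  · exact ⟨_, hred.lam, .inl rfl⟩
  · exact ⟨_, hred.lam, .inr hhead.lam⟩

/-- Elementary diagram: a head step `M →h M1` and an arbitrary step `M →β M2` can be
joined by `M1 ↠β M'` and either `M2 ≡ M'` or `M2 →h M'`. -/
theorem elementary_diagram :
    ∀ M M1 M2 : Lam, Head M M1 → Step M M2 →
      ∃ M' : Lam, Red M1 M' ∧ (M2 = M' ∨ Head M2 M') := by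
  intro M M1 M2 hh hs
  show HeadJoinable M1 M2
  induction hh generalizing M2 with
  | beta t u => exact .of_step_redex hs
  | app t hn hh ih =>
      cases hs with
      | beta => exact absurd rfl (hn _)
      | @appL _ s'' _ hs =>
          by_cases hlam : ∃ v, s'' = Lam.lam v
          · rw [hh.eq_of_step_to_lam hn hs hlam]
            exact .refl _
          · exact (ih _ hs).app_left t (not_exists.mp hlam)
      | appR _ hs => exact ⟨_, .single (.appR _ hs), .inr (.app _ hn hh)⟩
  | lam _ ih =>
      cases hs with
      | lam hs => exact (ih _ hs).lam

end Lam
end
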